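/- With A, C, S, R as in the CSR construction (λ(A) = 1) and P^(t) := C ⊗ S^t ⊗ R, one has the group law P^(t₁+t₂) = P^(t₁) ⊗ P^(t₂) for all t₁, t₂ ≥ 0. Consequently the matrices {P^(0), P^(1), …, P^(γ−1)} form a cyclic group of order dividing γ under max-algebraic multiplication, with identity P^(0) = C ⊗ R. -/

import Mathlib

/-!
Since `λ(A) = 1`, every closed walk has weight at most one (short ones are cycles of mean at most
one, long ones split into shorter closed walks). Hence the powers of `A` are bounded, `(A^γ)*` is
a genuine supremum, and its diagonal is at least one; moreover every cycle of the critical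
subgraph has weight one, because each of its edges can be closed to a critical cycle and the
returning walks together form a closed walk.

`P^(t₁+t₂) ≤ P^(t₁) ⊗ P^(t₂)` follows by inserting `(R ⊗ C)_kk ≥ 1` at the node between `S^t₁`
and `S^t₂`. Conversely, a term of `P^(t₁) ⊗ P^(t₂)` passes through a node `b` of `N_c`: walk `t₂`
steps from `b` around a critical cycle and return to `b` at no loss of weight; the returning leg,
followed by `R ⊗ C ⊗ S^t₂ ⊗ R`, is a walk whose length is divisible by `γ`, hence is dominated by a
row of `(A^γ)*`. The same two arguments give `P^(γ) = P^(0)`, so `t ↦ P^(t)` is `γ`-periodic and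
`P^(t)` has the inverse `P^((γ-1)t)`.
-/

open scoped NNReal Classical

namespace MaxAlg

/-- Max-times matrix product over `ℝ≥0`. -/
noncomputable def mmul {n : ℕ} (A B : Fin n → Fin n → ℝ≥0) : Fin n → Fin n → ℝ≥0 :=
  fun i j => Finset.univ.sup fun k => A i k * B k j

/-- Max-algebraic powers of a matrix, with `mpow A 0` the identity. -/
noncomputable def mpow {n : ℕ} (A : Fin n → Fin n → ℝ≥0) : ℕ → (Fin n → Fin n → ℝ≥0)
  | 0 => fun i j => if i = j then 1 else 0
  | (k+1) => mmul A (mpow A k)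

/-- Weight of a walk `p` of length `k` (product of the edge weights). -/
noncomputable def pathWeight {n : ℕ} (A : Fin n → Fin n → ℝ≥0) (k : ℕ)
    (p : Fin (k+1) → Fin n) : ℝ≥0 :=
  ∏ t : Fin k, A (p t.castSucc) (p t.succ)

/-- `p` is a walk in the edge relation `E`. -/
def IsEPath {n : ℕ} (E : Fin n → Fin n → Prop) (k : ℕ) (p : Fin (k+1) → Fin n) : Prop :=
  ∀ t : Fin k, E (p t.castSucc) (p t.succ)

/-- `j` is reachable from `i` in `E` (possibly by the empty path). -/
def Reach {n : ℕ} (E : Fin n → Fin n → Prop) (i j : Fin n) : Prop :=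
  ∃ k, ∃ p : Fin (k+1) → Fin n, IsEPath E k p ∧ p 0 = i ∧ p (Fin.last k) = j

/-- Edge relation of the digraph associated with a nonnegative matrix. -/
def edges {n : ℕ} (A : Fin n → Fin n → ℝ≥0) (i j : Fin n) : Prop := A i j ≠ 0

/-- Lengths of (positive-length) closed walks through `i` in `E`. -/
def cycLen {n : ℕ} (E : Fin n → Fin n → Prop) (i : Fin n) : Set ℕ :=
  {k | 0 < k ∧ ∃ p : Fin (k+1) → Fin n, IsEPath E k p ∧ p 0 = i ∧ p (Fin.last k) = i}

/-- Lengths of all closed walks in `E`. -/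
def allCycLen {n : ℕ} (E : Fin n → Fin n → Prop) : Set ℕ :=
  {k | ∃ i, k ∈ cycLen E i}

/-- The gcd of a set of naturals, characterized by the gcd property. -/
noncomputable def setGcd (S : Set ℕ) : ℕ :=
  sInf {d | (∀ s ∈ S, d ∣ s) ∧ ∀ e : ℕ, (∀ s ∈ S, e ∣ s) → e ∣ d}

/-- Cyclicity of a (completely reducible) digraph: lcm over the nodes of the
gcd of the cycle lengths through that node. -/
noncomputable def graphCyc {n : ℕ} (E : Fin n → Fin n → Prop) : ℕ :=
  Finset.univ.lcm fun i => if (cycLen E i).Nonempty then setGcd (cycLen E i) else 1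

/-- The maximum cycle geometric mean `λ(A)`. -/
noncomputable def mcgm {n : ℕ} (A : Fin n → Fin n → ℝ≥0) : ℝ≥0 :=
  sSup {x | ∃ k : ℕ, 0 < k ∧ k ≤ n ∧ ∃ p : Fin (k+1) → Fin n,
    p 0 = p (Fin.last k) ∧ x = pathWeight A k p ^ ((1 : ℝ) / (k : ℝ))}

/-- The Kleene star `A* = I ⊕ A ⊕ A² ⊕ ⋯` (entrywise supremum of all powers). -/
noncomputable def kleeneStar {n : ℕ} (A : Fin n → Fin n → ℝ≥0) : Fin n → Fin n → ℝ≥0 :=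
  fun i j => ⨆ k : ℕ, mpow A k i j

/-- `(i,j)` is a critical edge: it lies on a cycle attaining `λ(A)`. -/
def IsCriticalEdge {n : ℕ} (A : Fin n → Fin n → ℝ≥0) (i j : Fin n) : Prop :=
  ∃ k : ℕ, 0 < k ∧ k ≤ n ∧ ∃ p : Fin (k+1) → Fin n, p 0 = p (Fin.last k) ∧
    pathWeight A k p ^ ((1 : ℝ) / (k : ℝ)) = mcgm A ∧
    ∃ t : Fin k, p t.castSucc = i ∧ p t.succ = j

/-- A node lying on a critical cycle of `A`. -/
def IsCriticalNode {n : ℕ} (A : Fin n → Fin n → ℝ≥0) (i : Fin n) : Prop :=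
  (∃ j, IsCriticalEdge A i j) ∨ (∃ j, IsCriticalEdge A j i)

/-- A completely reducible subgraph of the critical graph of `A`:
every edge is critical, and every edge can be completed to a cycle of the
subgraph (so each weakly connected part is strongly connected). -/
structure CritSubgraph {n : ℕ} (A : Fin n → Fin n → ℝ≥0) where
  E : Fin n → Fin n → Prop
  critical : ∀ i j, E i j → IsCriticalEdge A i j
  reducible : ∀ i j, E i j → ∃ k, ∃ p : Fin (k+1) → Fin n,
    IsEPath E k p ∧ p 0 = j ∧ p (Fin.last k) = i

/-- Node set `N_c` of the subgraph. -/
def CritSubgraph.Nc {n : ℕ} {A : Fin n → Fin n → ℝ≥0} (G : CritSubgraph A) (i : Fin n) : Prop :=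
  (∃ j, G.E i j) ∨ (∃ j, G.E j i)

/-- The matrix `C`: columns of `(A^γ)*` with indices in `N_c`, other columns zero. -/
noncomputable def Cmat {n : ℕ} (A : Fin n → Fin n → ℝ≥0) (G : CritSubgraph A) :
    Fin n → Fin n → ℝ≥0 :=
  fun i j => if G.Nc j then kleeneStar (mpow A (graphCyc G.E)) i j else 0

/-- The matrix `R`: rows of `(A^γ)*` with indices in `N_c`, other rows zero. -/
noncomputable def Rmat {n : ℕ} (A : Fin n → Fin n → ℝ≥0) (G : CritSubgraph A) :
    Fin n → Fin n → ℝ≥0 :=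
  fun i j => if G.Nc i then kleeneStar (mpow A (graphCyc G.E)) i j else 0

/-- The matrix `S`: the restriction of `A` to the edges of the subgraph. -/
noncomputable def Smat {n : ℕ} (A : Fin n → Fin n → ℝ≥0) (G : CritSubgraph A) :
    Fin n → Fin n → ℝ≥0 :=
  fun i j => if G.E i j then A i j else 0

/-- The CSR product `P^(t) = C ⊗ S^t ⊗ R`. -/
noncomputable def csr {n : ℕ} (A : Fin n → Fin n → ℝ≥0) (G : CritSubgraph A) (t : ℕ) :
    Fin n → Fin n → ℝ≥0 :=
  mmul (mmul (Cmat A G) (mpow (Smat A G) t)) (Rmat A G)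

/-- The strongly connected component (as a node set) of `i` in `E`. -/
def scc {n : ℕ} (E : Fin n → Fin n → Prop) (i : Fin n) : Set (Fin n) :=
  {j | Reach E i j ∧ Reach E j i}

/-- The principal submatrix of `A` on the strongly connected component of `i`
in `D(A)` (other entries zero). -/
noncomputable def compMat {n : ℕ} (A : Fin n → Fin n → ℝ≥0) (i : Fin n) :
    Fin n → Fin n → ℝ≥0 :=
  fun a b => if a ∈ scc (edges A) i ∧ b ∈ scc (edges A) i then A a b else 0

/-- `λ(i)`: the m.c.g.m. of the component of `D(A)` containing `i`. -/
noncomputable def lamNode {n : ℕ} (A : Fin n → Fin n → ℝ≥0) (i : Fin n) : ℝ≥0 :=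
  mcgm (compMat A i)

/-- `i` belongs to a nontrivial component of `D(A)` (it lies on a cycle). -/
def Nontrivial' {n : ℕ} (A : Fin n → Fin n → ℝ≥0) (i : Fin n) : Prop :=
  (cycLen (edges A) i).Nonempty

/-- `γ`: the lcm of the cyclicities of the critical graphs of the nontrivial
components of `D(A)`. -/
noncomputable def gammaU {n : ℕ} (A : Fin n → Fin n → ℝ≥0) : ℕ :=
  Finset.univ.lcm fun i =>
    if Nontrivial' A i then graphCyc (IsCriticalEdge (compMat A i)) else 1

/-- Max-times matrix-vector product. -/
noncomputable def mvec {n : ℕ} (M : Fin n → Fin n → ℝ≥0) (y : Fin n → ℝ≥0) :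
    Fin n → ℝ≥0 :=
  fun a => Finset.univ.sup fun k => M a k * y k

/-- `i` strongly accesses `j`: paths of every sufficiently large length exist. -/
def StrongAccess {n : ℕ} (E : Fin n → Fin n → Prop) (i j : Fin n) : Prop :=
  ∃ T, ∀ t ≥ T, ∃ p : Fin (t+1) → Fin n, IsEPath E t p ∧ p 0 = i ∧ p (Fin.last t) = j

section MaxTimes

variable {n : ℕ}

lemma le_mmul (M N : Fin n → Fin n → ℝ≥0) (i k j : Fin n) : M i k * N k j ≤ mmul M N i j :=
  Finset.le_sup (f := fun k => M i k * N k j) (Finset.mem_univ k)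

lemma exists_mmul_eq (M N : Fin n → Fin n → ℝ≥0) (i j : Fin n) :
    ∃ k, mmul M N i j = M i k * N k j := by
  obtain ⟨k, -, hk⟩ :=
    Finset.exists_mem_eq_sup Finset.univ ⟨i, Finset.mem_univ i⟩ fun k => M i k * N k j
  exact ⟨k, hk⟩

lemma mmul_mono {M M' N N' : Fin n → Fin n → ℝ≥0} (hM : M ≤ M') (hN : N ≤ N') :
    mmul M N ≤ mmul M' N' := fun i j =>
  Finset.sup_mono_fun fun k _ => mul_le_mul' (hM i k) (hN k j)

lemma mmul_assoc (M N K : Fin n → Fin n → ℝ≥0) :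
    mmul (mmul M N) K = mmul M (mmul N K) := by
  funext i j
  apply le_antisymm
  · obtain ⟨b, hb⟩ := exists_mmul_eq (mmul M N) K i j
    obtain ⟨a, ha⟩ := exists_mmul_eq M N i b
    rw [hb, ha, mul_assoc]
    exact (mul_le_mul_right (le_mmul N K a b j) _).trans (le_mmul M _ i a j)
  · obtain ⟨a, ha⟩ := exists_mmul_eq M (mmul N K) i j
    obtain ⟨b, hb⟩ := exists_mmul_eq N K a j
    rw [ha, hb, ← mul_assoc]
    exact (mul_le_mul_left (le_mmul M N i a b) _).trans (le_mmul _ K i b j)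

lemma mpow_zero_apply (M : Fin n → Fin n → ℝ≥0) (i j : Fin n) :
    mpow M 0 i j = if i = j then 1 else 0 := rfl

lemma mpow_succ (M : Fin n → Fin n → ℝ≥0) (k : ℕ) : mpow M (k + 1) = mmul M (mpow M k) := rfl

lemma mpow_zero_mmul (M N : Fin n → Fin n → ℝ≥0) : mmul (mpow M 0) N = N := by
  funext i j
  apply le_antisymm
  · obtain ⟨k, hk⟩ := exists_mmul_eq (mpow M 0) N i j
    rw [hk, mpow_zero_apply]
    split_ifs with h
    · rw [h, one_mul]
    · rw [zero_mul]; exact zero_le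
  · simpa [mpow_zero_apply] using le_mmul (mpow M 0) N i i j

lemma mpow_one (M : Fin n → Fin n → ℝ≥0) : mpow M 1 = M := by
  funext i j
  apply le_antisymm
  · obtain ⟨k, hk⟩ := exists_mmul_eq M (mpow M 0) i j
    rw [mpow_succ, hk, mpow_zero_apply]
    split_ifs with h
    · rw [h, mul_one]
    · rw [mul_zero]; exact zero_le
  · simpa [mpow_succ, mpow_zero_apply] using le_mmul M (mpow M 0) i j j

lemma mpow_add (M : Fin n → Fin n → ℝ≥0) (a b : ℕ) :
    mpow M (a + b) = mmul (mpow M a) (mpow M b) := by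
  induction a with
  | zero => rw [zero_add, mpow_zero_mmul]
  | succ a ih => rw [Nat.add_right_comm, mpow_succ, ih, ← mmul_assoc, ← mpow_succ]

lemma mpow_mul (M : Fin n → Fin n → ℝ≥0) (a b : ℕ) : mpow M (a * b) = mpow (mpow M a) b := by
  induction b with
  | zero => rfl
  | succ b ih => rw [Nat.mul_succ, add_comm, mpow_add, ih, ← mpow_succ]

lemma mpow_mul_mpow_le (M : Fin n → Fin n → ℝ≥0) (p q : ℕ) (x y z : Fin n) :
    mpow M p x y * mpow M q y z ≤ mpow M (p + q) x z := by
  rw [mpow_add]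
  exact le_mmul _ _ x y z

lemma exists_mpow_add_eq (M : Fin n → Fin n → ℝ≥0) (p q : ℕ) (x z : Fin n) :
    ∃ y, mpow M (p + q) x z = mpow M p x y * mpow M q y z := by
  rw [mpow_add]
  exact exists_mmul_eq _ _ x z

lemma mpow_mono {M N : Fin n → Fin n → ℝ≥0} (h : M ≤ N) (k : ℕ) : mpow M k ≤ mpow N k := by
  induction k with
  | zero => exact le_rfl
  | succ k ih => exact mmul_mono h ih

lemma mpow_le_pow {M : Fin n → Fin n → ℝ≥0} {c : ℝ≥0} (hM : ∀ i j, M i j ≤ c) (k : ℕ)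
    (i j : Fin n) : mpow M k i j ≤ c ^ k := by
  induction k generalizing i with
  | zero => rw [mpow_zero_apply]; split_ifs <;> simp
  | succ k ih =>
    obtain ⟨y, hy⟩ := exists_mmul_eq M (mpow M k) i j
    rw [mpow_succ, hy, pow_succ']
    exact mul_le_mul' (hM i y) (ih y)

lemma one_le_mpow_mul {M : Fin n → Fin n → ℝ≥0} {ℓ : ℕ} {b : Fin n} (h : 1 ≤ mpow M ℓ b b)
    (N : ℕ) : 1 ≤ mpow M (ℓ * N) b b := by
  induction N with
  | zero => simp [mpow_zero_apply]
  | succ N ih => exact (one_le_mul ih h).trans (mpow_mul_mpow_le M _ _ b b b)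

end MaxTimes

section Walks

variable {n : ℕ}

noncomputable def walkWeight (A : Fin n → Fin n → ℝ≥0) (k : ℕ) (p : ℕ → Fin n) : ℝ≥0 :=
  ∏ t ∈ Finset.range k, A (p t) (p (t + 1))

lemma walkWeight_add (A : Fin n → Fin n → ℝ≥0) (a b : ℕ) (p : ℕ → Fin n) :
    walkWeight A (a + b) p = walkWeight A a p * walkWeight A b (fun s => p (a + s)) := by
  simp only [walkWeight, Finset.prod_range_add, add_assoc]

lemma walkWeight_le_mpow (A : Fin n → Fin n → ℝ≥0) (k : ℕ) (p : ℕ → Fin n) :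
    walkWeight A k p ≤ mpow A k (p 0) (p k) := by
  induction k generalizing p with
  | zero => simp [walkWeight, mpow_zero_apply]
  | succ k ih =>
    rw [walkWeight, Finset.prod_range_succ', mul_comm]
    exact (mul_le_mul_right (ih fun s => p (s + 1)) _).trans (le_mmul A (mpow A k) _ _ _)

lemma exists_walkWeight_eq_mpow {A : Fin n → Fin n → ℝ≥0} {k : ℕ} {i j : Fin n}
    (h : mpow A k i j ≠ 0) :
    ∃ p : ℕ → Fin n, p 0 = i ∧ p k = j ∧ walkWeight A k p = mpow A k i j := by
  induction k generalizing i with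
  | zero =>
    obtain rfl : i = j := by by_contra hij; exact h (if_neg hij)
    exact ⟨fun _ => i, rfl, rfl, by simp [walkWeight, mpow_zero_apply]⟩
  | succ k ih =>
    obtain ⟨y, hy⟩ := exists_mmul_eq A (mpow A k) i j
    rw [mpow_succ, hy] at h ⊢
    obtain ⟨q, hq0, hqk, hq⟩ := ih (right_ne_zero_of_mul h)
    refine ⟨fun | 0 => i | s + 1 => q s, rfl, hqk, ?_⟩
    subst hq0
    rw [walkWeight, Finset.prod_range_succ', mul_comm, ← hq]
    rfl

lemma exists_lt_le_apply_eq (p : ℕ → Fin n) : ∃ s t, s < t ∧ t ≤ n ∧ p s = p t := by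
  obtain ⟨x, y, hxy, h⟩ :=
    Fintype.exists_ne_map_eq_of_card_lt (fun t : Fin (n + 1) => p t) (by simp)
  rcases lt_or_gt_of_ne (Fin.val_ne_of_ne hxy) with hlt | hlt
  · exact ⟨x, y, hlt, Nat.lt_succ_iff.mp y.isLt, h⟩
  · exact ⟨y, x, hlt, Nat.lt_succ_iff.mp x.isLt, h.symm⟩

/-- A walk longer than `n` repeats a node, so it factors through a closed walk. -/
lemma exists_mpow_le_mul_cycle {A : Fin n → Fin n → ℝ≥0} {k : ℕ} (hk : n < k) (i j : Fin n) :
    ∃ x s d e, 0 < d ∧ d ≤ n ∧ s + d + e = k ∧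
      mpow A k i j ≤ mpow A s i x * mpow A d x x * mpow A e x j := by
  rcases eq_or_ne (mpow A k i j) 0 with h | h
  · exact ⟨i, 0, 1, k - 1, one_pos, i.pos, by omega, by simp [h]⟩
  obtain ⟨p, hp0, hpk, hw⟩ := exists_walkWeight_eq_mpow h
  obtain ⟨s, t, hst, htn, hpst⟩ := exists_lt_le_apply_eq p
  obtain ⟨d, hd, rfl⟩ : ∃ d, 0 < d ∧ t = s + d := ⟨t - s, by omega, by omega⟩
  obtain ⟨e, rfl⟩ := Nat.exists_eq_add_of_le (htn.trans hk.le)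
  refine ⟨p s, s, d, e, hd, by omega, rfl, ?_⟩
  rw [← hw, walkWeight_add A (s + d) e, walkWeight_add A s d]
  gcongr
  · simpa [hp0] using walkWeight_le_mpow A s p
  · simpa [← hpst] using walkWeight_le_mpow A d fun u => p (s + u)
  · simpa [← hpst, hpk] using walkWeight_le_mpow A e fun u => p (s + d + u)

/-- Indices past `k` wrap around modulo `k + 1`; only `0, …, k` matter. -/
def toWalk {k : ℕ} (p : Fin (k + 1) → Fin n) : ℕ → Fin n := fun s => p (Fin.ofNat (k + 1) s)

lemma toWalk_val {k : ℕ} (p : Fin (k + 1) → Fin n) (t : Fin (k + 1)) : toWalk p t = p t :=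
  congrArg p (Fin.ext (Nat.mod_eq_of_lt t.isLt))

lemma toWalk_zero {k : ℕ} (p : Fin (k + 1) → Fin n) : toWalk p 0 = p 0 :=
  toWalk_val p 0

lemma toWalk_last {k : ℕ} (p : Fin (k + 1) → Fin n) : toWalk p k = p (Fin.last k) :=
  toWalk_val p (Fin.last k)

lemma pathWeight_eq_walkWeight (A : Fin n → Fin n → ℝ≥0) {k : ℕ} (p : ℕ → Fin n) :
    pathWeight A k (fun t => p t) = walkWeight A k p := by
  simp only [pathWeight, walkWeight, Fin.val_castSucc, Fin.val_succ]
  exact Fin.prod_univ_eq_prod_range (fun t => A (p t) (p (t + 1))) k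

lemma pathWeight_eq_walkWeight_toWalk (A : Fin n → Fin n → ℝ≥0) {k : ℕ}
    (p : Fin (k + 1) → Fin n) : pathWeight A k p = walkWeight A k (toWalk p) := by
  rw [← pathWeight_eq_walkWeight]
  simp only [toWalk_val]

lemma IsEPath.toWalk {E : Fin n → Fin n → Prop} {k : ℕ} {p : Fin (k + 1) → Fin n}
    (hp : IsEPath E k p) {s : ℕ} (hs : s < k) : E (toWalk p s) (toWalk p (s + 1)) := by
  have h₁ := toWalk_val p (Fin.castSucc ⟨s, hs⟩)
  have h₂ := toWalk_val p (Fin.succ ⟨s, hs⟩)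
  simp only [Fin.val_castSucc, Fin.val_succ] at h₁ h₂
  rw [h₁, h₂]
  exact hp ⟨s, hs⟩

end Walks

section CycleMean

variable {n : ℕ} {A : Fin n → Fin n → ℝ≥0}

lemma pathWeight_le_one (h1 : mcgm A = 1) {k : ℕ} (hk : 0 < k) (hkn : k ≤ n)
    (p : Fin (k + 1) → Fin n) (hp : p 0 = p (Fin.last k)) : pathWeight A k p ≤ 1 := by
  unfold mcgm at h1
  have hbdd : BddAbove {x | ∃ k : ℕ, 0 < k ∧ k ≤ n ∧ ∃ p : Fin (k + 1) → Fin n,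
      p 0 = p (Fin.last k) ∧ x = pathWeight A k p ^ ((1 : ℝ) / (k : ℝ))} := by
    by_contra h
    rw [NNReal.sSup_of_not_bddAbove h] at h1
    exact zero_ne_one h1
  have hle : pathWeight A k p ^ ((1 : ℝ) / k) ≤ 1 := h1 ▸ le_csSup hbdd ⟨k, hk, hkn, p, hp, rfl⟩
  rw [← NNReal.rpow_inv_natCast_pow (pathWeight A k p) hk.ne', ← one_div]
  exact pow_le_one₀ zero_le hle

lemma mpow_apply_self_le_one (h1 : mcgm A = 1) (k : ℕ) (i : Fin n) : mpow A k i i ≤ 1 := by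
  induction k using Nat.strong_induction_on generalizing i with
  | _ k ih =>
  rcases Nat.eq_zero_or_pos k with rfl | hk
  · simp [mpow_zero_apply]
  rcases le_or_gt k n with hkn | hnk
  · rcases eq_or_ne (mpow A k i i) 0 with h | h
    · simp [h]
    obtain ⟨p, hp0, hpk, hw⟩ := exists_walkWeight_eq_mpow h
    rw [← hw, ← pathWeight_eq_walkWeight]
    exact pathWeight_le_one h1 hk hkn _ (by simp [hp0, hpk])
  · obtain ⟨x, s, d, e, hd, hdn, rfl, hle⟩ := exists_mpow_le_mul_cycle hnk i i
    calc mpow A (s + d + e) i i ≤ mpow A s i x * mpow A d x x * mpow A e x i := hle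
      _ = mpow A d x x * (mpow A e x i * mpow A s i x) := by ring
      _ ≤ 1 * mpow A (e + s) x x := mul_le_mul' (ih d (by omega) x) (mpow_mul_mpow_le A _ _ _ _ _)
      _ ≤ 1 := by rw [one_mul]; exact ih (e + s) (by omega) x

lemma bddAbove_range_mpow (h1 : mcgm A = 1) : BddAbove (Set.range (mpow A)) := by
  obtain ⟨c₀, hc₀⟩ := Finite.bddAbove_range fun e : Fin n × Fin n => A e.1 e.2
  set c := max c₀ 1
  have hA : ∀ i j, A i j ≤ c := fun i j => (hc₀ ⟨(i, j), rfl⟩).trans (le_max_left _ _)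
  have key : ∀ k i j, mpow A k i j ≤ c ^ n := by
    intro k
    induction k using Nat.strong_induction_on with
    | _ k ih =>
    intro i j
    rcases le_or_gt k n with hkn | hnk
    · exact (mpow_le_pow hA k i j).trans (pow_le_pow_right₀ (le_max_right _ _) hkn)
    obtain ⟨x, s, d, e, hd, -, rfl, hle⟩ := exists_mpow_le_mul_cycle hnk i j
    calc mpow A (s + d + e) i j ≤ mpow A s i x * mpow A d x x * mpow A e x j := hle
      _ ≤ mpow A s i x * 1 * mpow A e x j := by gcongr; exact mpow_apply_self_le_one h1 d x
      _ ≤ mpow A (s + e) i j := by rw [mul_one]; exact mpow_mul_mpow_le A _ _ _ _ _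
      _ ≤ c ^ n := ih (s + e) (by omega) i j
  exact ⟨fun _ _ => c ^ n, by rintro _ ⟨k, rfl⟩ i j; exact key k i j⟩

lemma exists_one_le_mul_mpow_of_isCriticalEdge (h1 : mcgm A = 1) {x y : Fin n}
    (hxy : IsCriticalEdge A x y) : ∃ m, 1 ≤ A x y * mpow A m y x := by
  obtain ⟨k, hk, -, p, hcl, hw, t, hx, hy⟩ := hxy
  have hp : walkWeight A k (toWalk p) = 1 := by
    rw [← pathWeight_eq_walkWeight_toWalk, ← NNReal.rpow_inv_natCast_pow (pathWeight A k p) hk.ne',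
      ← one_div, hw, h1, one_pow]
  have hq : toWalk p k = toWalk p 0 := by rw [toWalk_last, toWalk_zero, hcl]
  set q := toWalk p
  have hqx : q t = x := by simpa [q, hx] using toWalk_val p t.castSucc
  have hqy : q (t + 1) = y := by simpa [q, hy] using toWalk_val p t.succ
  obtain ⟨r, hr⟩ : ∃ r, k = t + 1 + r := ⟨k - (t + 1), by omega⟩
  rw [hr] at hp hq
  rw [walkWeight_add A (t + 1) r, walkWeight_add A t 1] at hp
  refine ⟨r + t, ?_⟩
  calc 1 = walkWeight A t q * A x y * walkWeight A r (fun s => q (t + 1 + s)) := by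
        rw [← hp, ← hqx, ← hqy]; simp [walkWeight]
    _ ≤ mpow A t (q 0) x * A x y * mpow A r y (q 0) := by
        gcongr
        · simpa [hqx] using walkWeight_le_mpow A t q
        · simpa [hqy, ← hq] using walkWeight_le_mpow A r fun s => q (t + 1 + s)
    _ = A x y * (mpow A r y (q 0) * mpow A t (q 0) x) := by ring
    _ ≤ A x y * mpow A (r + t) y x := mul_le_mul_right (mpow_mul_mpow_le A _ _ _ _ _) _

end CycleMean

section Return

variable {n : ℕ}

def HasReturn (S A : Fin n → Fin n → ℝ≥0) (k : ℕ) (x y : Fin n) : Prop :=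
  ∃ m, 1 ≤ mpow S k x y * mpow A m y x

lemma HasReturn.refl (S A : Fin n → Fin n → ℝ≥0) (x : Fin n) : HasReturn S A 0 x x :=
  ⟨0, by simp [mpow_zero_apply]⟩

lemma HasReturn.trans {S A : Fin n → Fin n → ℝ≥0} {k l : ℕ} {x y z : Fin n}
    (hxy : HasReturn S A k x y) (hyz : HasReturn S A l y z) : HasReturn S A (k + l) x z := by
  obtain ⟨m₁, h₁⟩ := hxy
  obtain ⟨m₂, h₂⟩ := hyz
  refine ⟨m₂ + m₁, ?_⟩
  calc 1 ≤ mpow S k x y * mpow A m₁ y x * (mpow S l y z * mpow A m₂ z y) := one_le_mul h₁ h₂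
    _ = mpow S k x y * mpow S l y z * (mpow A m₂ z y * mpow A m₁ y x) := by ring
    _ ≤ _ := mul_le_mul' (mpow_mul_mpow_le S _ _ _ _ _) (mpow_mul_mpow_le A _ _ _ _ _)

end Return

section CritSubgraph

variable {n : ℕ} {A : Fin n → Fin n → ℝ≥0} {G : CritSubgraph A}

lemma Smat_le : Smat A G ≤ A := fun i j => by
  unfold Smat
  split_ifs <;> simp

lemma Nc_of_mpow_Smat_ne_zero {k : ℕ} {x y : Fin n} (h : mpow (Smat A G) k x y ≠ 0)
    (hy : G.Nc y) : G.Nc x := by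
  cases k with
  | zero =>
    obtain rfl : x = y := by by_contra hxy; exact h (if_neg hxy)
    exact hy
  | succ k =>
    obtain ⟨z, hz⟩ := exists_mmul_eq (Smat A G) (mpow (Smat A G) k) x y
    rw [mpow_succ, hz] at h
    exact Or.inl ⟨z, by_contra fun hE => left_ne_zero_of_mul h (if_neg hE)⟩

lemma hasReturn_of_E (h1 : mcgm A = 1) {x y : Fin n} (hxy : G.E x y) :
    HasReturn (Smat A G) A 1 x y := by
  obtain ⟨m, hm⟩ := exists_one_le_mul_mpow_of_isCriticalEdge h1 (G.critical x y hxy)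
  refine ⟨m, ?_⟩
  rwa [mpow_one, Smat, if_pos hxy]

lemma hasReturn_of_walk (h1 : mcgm A = 1) {z : ℕ → Fin n} :
    ∀ k, (∀ s < k, G.E (z s) (z (s + 1))) → HasReturn (Smat A G) A k (z 0) (z k)
  | 0, _ => HasReturn.refl _ _ _
  | k + 1, hz => (hasReturn_of_walk h1 k fun s hs => hz s (by omega)).trans
      (hasReturn_of_E h1 (hz k k.lt_succ_self))

lemma hasReturn_of_isEPath (h1 : mcgm A = 1) {k : ℕ} {p : Fin (k + 1) → Fin n}
    (hp : IsEPath G.E k p) : HasReturn (Smat A G) A k (p 0) (p (Fin.last k)) := by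
  rw [← toWalk_zero p, ← toWalk_last p]
  exact hasReturn_of_walk h1 k fun s hs => hp.toWalk hs

/-- Complete reducibility closes every edge at a node of `N_c` to a cycle of the subgraph. -/
lemma exists_hasReturn_self (h1 : mcgm A = 1) {b : Fin n} (hb : G.Nc b) :
    ∃ ℓ, 0 < ℓ ∧ HasReturn (Smat A G) A ℓ b b := by
  rcases hb with ⟨j, hbj⟩ | ⟨j, hjb⟩
  · obtain ⟨k, p, hp, rfl, hpk⟩ := G.reducible b j hbj
    refine ⟨1 + k, by omega, (hasReturn_of_E h1 hbj).trans ?_⟩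
    simpa [hpk] using hasReturn_of_isEPath h1 hp
  · obtain ⟨k, p, hp, hp0, rfl⟩ := G.reducible j b hjb
    refine ⟨k + 1, by omega, HasReturn.trans ?_ (hasReturn_of_E h1 hjb)⟩
    simpa [hp0] using hasReturn_of_isEPath h1 hp

lemma exists_one_le_mpow_Smat_self (h1 : mcgm A = 1) {b : Fin n} (hb : G.Nc b) :
    ∃ ℓ, 0 < ℓ ∧ 1 ≤ mpow (Smat A G) ℓ b b := by
  obtain ⟨ℓ, hℓ, m, hm⟩ := exists_hasReturn_self h1 hb
  exact ⟨ℓ, hℓ, hm.trans (mul_le_of_le_one_right zero_le (mpow_apply_self_le_one h1 m b))⟩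

/-- Go `γ (m + 1)` times around a cycle of the subgraph through `b`. -/
lemma exists_one_le_mpow_Smat_mul_mpow (h1 : mcgm A = 1) {b : Fin n} (hb : G.Nc b) {γ : ℕ}
    (hγ : 0 < γ) (m : ℕ) :
    ∃ d, G.Nc d ∧ ∃ e, γ ∣ m + e ∧ 1 ≤ mpow (Smat A G) m b d * mpow A e d b := by
  obtain ⟨ℓ, hℓ, hS⟩ := exists_one_le_mpow_Smat_self h1 hb
  have hm : m ≤ ℓ * (γ * (m + 1)) :=
    (Nat.le_succ m).trans ((Nat.le_mul_of_pos_left _ hγ).trans (Nat.le_mul_of_pos_left _ hℓ))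
  obtain ⟨e, he⟩ := Nat.exists_eq_add_of_le hm
  obtain ⟨d, hd⟩ := exists_mpow_add_eq (Smat A G) m e b b
  have h : 1 ≤ mpow (Smat A G) m b d * mpow (Smat A G) e d b := by
    rw [← hd, ← he]
    exact one_le_mpow_mul hS _
  refine ⟨d, Nc_of_mpow_Smat_ne_zero (right_ne_zero_of_mul (one_pos.trans_le h).ne') hb, e,
    ⟨ℓ * (m + 1), by rw [← he]; ring⟩, h.trans ?_⟩
  exact mul_le_mul_right (mpow_mono Smat_le e d b) _

end CritSubgraph

section Cyclicity

lemma exists_isGcd (S : Set ℕ) :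
    ∃ d : ℕ, (∀ s ∈ S, d ∣ s) ∧ ∀ e : ℕ, (∀ s ∈ S, e ∣ s) → e ∣ d := by
  obtain ⟨g, hg⟩ := Submodule.IsPrincipal.principal (Ideal.span ((↑) '' S : Set ℤ))
  refine ⟨g.natAbs, fun s hs => ?_, fun e he => ?_⟩
  · have hs : (s : ℤ) ∈ Ideal.span ((↑) '' S : Set ℤ) := Ideal.subset_span ⟨s, hs, rfl⟩
    rw [hg] at hs
    exact Int.natAbs_dvd_natAbs.mpr (Ideal.mem_span_singleton.mp hs)
  · have hle : Ideal.span ((↑) '' S : Set ℤ) ≤ Ideal.span {(e : ℤ)} := by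
      rw [Ideal.span_le]
      rintro _ ⟨s, hs, rfl⟩
      exact Ideal.mem_span_singleton.mpr (Int.natCast_dvd_natCast.mpr (he s hs))
    have hg' : g ∈ Ideal.span ((↑) '' S : Set ℤ) := by
      rw [hg]
      exact Ideal.mem_span_singleton_self g
    exact Int.natAbs_dvd_natAbs.mpr (Ideal.mem_span_singleton.mp (hle hg'))

lemma setGcd_pos {S : Set ℕ} {s : ℕ} (hs : s ∈ S) (hpos : 0 < s) : 0 < setGcd S :=
  Nat.pos_of_dvd_of_pos ((Nat.sInf_mem (exists_isGcd S)).1 s hs) hpos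

lemma graphCyc_pos {n : ℕ} (E : Fin n → Fin n → Prop) : 0 < graphCyc E := by
  refine Nat.pos_of_ne_zero fun h => ?_
  obtain ⟨i, -, hi⟩ := Finset.lcm_eq_zero_iff.mp h
  split_ifs at hi with hne
  obtain ⟨k, hk⟩ := hne
  exact (setGcd_pos hk hk.1).ne' hi

end Cyclicity

section KleeneStar

variable {n : ℕ} {A : Fin n → Fin n → ℝ≥0}

lemma mpow_le_kleeneStar (hA : BddAbove (Set.range (mpow A))) (γ : ℕ) {p : ℕ} (hp : γ ∣ p)
    (x y : Fin n) :
    mpow A p x y ≤ kleeneStar (mpow A γ) x y := by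
  obtain ⟨c, hc⟩ := hA
  obtain ⟨u, rfl⟩ := hp
  rw [mpow_mul]
  refine le_ciSup (f := fun v => mpow (mpow A γ) v x y) ⟨c x y, ?_⟩ u
  rintro _ ⟨v, rfl⟩
  dsimp only
  rw [← mpow_mul]
  exact hc ⟨γ * v, rfl⟩ x y

lemma one_le_kleeneStar (hA : BddAbove (Set.range (mpow A))) (γ : ℕ) (x : Fin n) :
    1 ≤ kleeneStar (mpow A γ) x x := by
  simpa [mpow_zero_apply] using mpow_le_kleeneStar hA γ (dvd_zero γ) x x

lemma kleeneStar_mul_kleeneStar_le (hA : BddAbove (Set.range (mpow A))) (γ : ℕ)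
    (x y z : Fin n) :
    kleeneStar (mpow A γ) x y * kleeneStar (mpow A γ) y z ≤ kleeneStar (mpow A γ) x z := by
  refine NNReal.iSup_mul_iSup_le fun u v => ?_
  rw [← mpow_mul, ← mpow_mul]
  exact (mpow_mul_mpow_le A _ _ x y z).trans (mpow_le_kleeneStar hA γ ⟨u + v, by ring⟩ x z)

lemma mpow_mul_kleeneStar_mul_mpow_le (hA : BddAbove (Set.range (mpow A))) (γ : ℕ) {p q : ℕ}
    (hpq : γ ∣ p + q) (x y z w : Fin n) :
    mpow A p x y * kleeneStar (mpow A γ) y z * mpow A q z w ≤ kleeneStar (mpow A γ) x w := by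
  unfold kleeneStar
  rw [NNReal.mul_iSup, NNReal.iSup_mul]
  refine ciSup_le fun u => ?_
  obtain ⟨c, hc⟩ := hpq
  rw [← mpow_mul]
  calc mpow A p x y * mpow A (γ * u) y z * mpow A q z w ≤ mpow A (p + γ * u + q) x w :=
        (mul_le_mul_left (mpow_mul_mpow_le A _ _ x y z) _).trans (mpow_mul_mpow_le A _ _ x z w)
    _ ≤ _ := mpow_le_kleeneStar hA γ ⟨c + u, by rw [Nat.add_right_comm, hc]; ring⟩ x w

end KleeneStar

section CSR

variable {n : ℕ} {A : Fin n → Fin n → ℝ≥0} {G : CritSubgraph A}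

lemma Cmat_le (i a : Fin n) : Cmat A G i a ≤ kleeneStar (mpow A (graphCyc G.E)) i a := by
  unfold Cmat
  split_ifs <;> simp

lemma Rmat_le (d j : Fin n) : Rmat A G d j ≤ kleeneStar (mpow A (graphCyc G.E)) d j := by
  unfold Rmat
  split_ifs <;> simp

lemma Cmat_of_Nc {a : Fin n} (ha : G.Nc a) (i : Fin n) :
    Cmat A G i a = kleeneStar (mpow A (graphCyc G.E)) i a :=
  if_pos ha

lemma Rmat_of_Nc {d : Fin n} (hd : G.Nc d) (j : Fin n) :
    Rmat A G d j = kleeneStar (mpow A (graphCyc G.E)) d j :=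
  if_pos hd

lemma Nc_of_Cmat_ne_zero {i a : Fin n} (h : Cmat A G i a ≠ 0) : G.Nc a :=
  by_contra fun ha => h (if_neg ha)

lemma Nc_of_Rmat_ne_zero {d j : Fin n} (h : Rmat A G d j ≠ 0) : G.Nc d :=
  by_contra fun hd => h (if_neg hd)

lemma le_csr (t : ℕ) (i a d j : Fin n) :
    Cmat A G i a * mpow (Smat A G) t a d * Rmat A G d j ≤ csr A G t i j :=
  (mul_le_mul_left (le_mmul _ _ i a d) _).trans (le_mmul _ _ i d j)

variable (G) in
lemma exists_csr_eq (t : ℕ) (i j : Fin n) :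
    ∃ a d, csr A G t i j = Cmat A G i a * mpow (Smat A G) t a d * Rmat A G d j := by
  obtain ⟨d, hd⟩ := exists_mmul_eq (mmul (Cmat A G) (mpow (Smat A G) t)) (Rmat A G) i j
  obtain ⟨a, ha⟩ := exists_mmul_eq (Cmat A G) (mpow (Smat A G) t) i d
  exact ⟨a, d, by rw [csr, hd, ha]⟩

lemma csr_add_le (h1 : mcgm A = 1) (t₁ t₂ : ℕ) :
    csr A G (t₁ + t₂) ≤ mmul (csr A G t₁) (csr A G t₂) := by
  intro i j
  obtain ⟨a, d, had⟩ := exists_csr_eq G (t₁ + t₂) i j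
  obtain ⟨k, hk⟩ := exists_mpow_add_eq (Smat A G) t₁ t₂ a d
  rw [had, hk]
  rcases eq_or_ne (mpow (Smat A G) t₂ k d * Rmat A G d j) 0 with h0 | h0
  · calc _ = Cmat A G i a * mpow (Smat A G) t₁ a k * (mpow (Smat A G) t₂ k d * Rmat A G d j) := by
          ring
      _ ≤ _ := by rw [h0, mul_zero]; exact zero_le
  have hB := bddAbove_range_mpow h1
  have hk : G.Nc k := Nc_of_mpow_Smat_ne_zero (left_ne_zero_of_mul h0)
    (Nc_of_Rmat_ne_zero (right_ne_zero_of_mul h0))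
  have hR : 1 ≤ Rmat A G k k := (Rmat_of_Nc hk k).symm ▸ one_le_kleeneStar hB _ k
  have hC : 1 ≤ Cmat A G k k := (Cmat_of_Nc hk k).symm ▸ one_le_kleeneStar hB _ k
  calc Cmat A G i a * (mpow (Smat A G) t₁ a k * mpow (Smat A G) t₂ k d) * Rmat A G d j
      = Cmat A G i a * mpow (Smat A G) t₁ a k * 1 *
          (1 * mpow (Smat A G) t₂ k d * Rmat A G d j) := by ring
    _ ≤ Cmat A G i a * mpow (Smat A G) t₁ a k * Rmat A G k k *
          (Cmat A G k k * mpow (Smat A G) t₂ k d * Rmat A G d j) := by gcongr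
    _ ≤ csr A G t₁ i k * csr A G t₂ k j := mul_le_mul' (le_csr t₁ i a k k) (le_csr t₂ k k d j)
    _ ≤ _ := le_mmul _ _ i k j

lemma mpow_mul_Rmat_mul_csr_term_le (h1 : mcgm A = 1) {d' : Fin n} (hd' : G.Nc d') {e t : ℕ}
    (het : graphCyc G.E ∣ e + t) (b k c d j : Fin n) :
    mpow A e d' b * Rmat A G b k * Cmat A G k c * mpow (Smat A G) t c d * Rmat A G d j ≤
      Rmat A G d' j := by
  have hB := bddAbove_range_mpow h1
  set γ := graphCyc G.E
  rw [Rmat_of_Nc hd']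
  calc _ ≤ mpow A e d' b * kleeneStar (mpow A γ) b k * kleeneStar (mpow A γ) k c *
        mpow A t c d * kleeneStar (mpow A γ) d j := by
        gcongr
        · exact Rmat_le b k
        · exact Cmat_le k c
        · exact mpow_mono Smat_le t c d
        · exact Rmat_le d j
    _ ≤ mpow A e d' b * kleeneStar (mpow A γ) b c * mpow A t c d *
        kleeneStar (mpow A γ) d j := by
        rw [mul_assoc (mpow A e d' b)]
        gcongr
        exact kleeneStar_mul_kleeneStar_le hB γ b k c
    _ ≤ kleeneStar (mpow A γ) d' d * kleeneStar (mpow A γ) d j := by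
        gcongr
        exact mpow_mul_kleeneStar_mul_mpow_le hB γ het d' b c d
    _ ≤ _ := kleeneStar_mul_kleeneStar_le hB γ d' d j

lemma mmul_csr_le (h1 : mcgm A = 1) (t₁ t₂ : ℕ) :
    mmul (csr A G t₁) (csr A G t₂) ≤ csr A G (t₁ + t₂) := by
  intro i j
  obtain ⟨k, hk⟩ := exists_mmul_eq (csr A G t₁) (csr A G t₂) i j
  obtain ⟨a, b, hab⟩ := exists_csr_eq G t₁ i k
  obtain ⟨c, d, hcd⟩ := exists_csr_eq G t₂ k j
  rw [hk, hab, hcd]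
  rcases eq_or_ne (Rmat A G b k) 0 with h0 | h0
  · rw [h0, mul_zero, zero_mul]
    exact zero_le
  obtain ⟨d', hd', e, hdvd, hret⟩ :=
    exists_one_le_mpow_Smat_mul_mpow h1 (Nc_of_Rmat_ne_zero h0) (graphCyc_pos G.E) t₂
  have htail :=
    mpow_mul_Rmat_mul_csr_term_le h1 hd' (add_comm t₂ e ▸ hdvd) b k c d j
  calc Cmat A G i a * mpow (Smat A G) t₁ a b * Rmat A G b k *
        (Cmat A G k c * mpow (Smat A G) t₂ c d * Rmat A G d j)
      ≤ Cmat A G i a * mpow (Smat A G) t₁ a b * Rmat A G b k *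
        (Cmat A G k c * mpow (Smat A G) t₂ c d * Rmat A G d j) *
        (mpow (Smat A G) t₂ b d' * mpow A e d' b) := le_mul_of_one_le_right zero_le hret
    _ = Cmat A G i a * (mpow (Smat A G) t₁ a b * mpow (Smat A G) t₂ b d') *
        (mpow A e d' b * Rmat A G b k * Cmat A G k c * mpow (Smat A G) t₂ c d *
          Rmat A G d j) := by ring
    _ ≤ Cmat A G i a * mpow (Smat A G) (t₁ + t₂) a d' * Rmat A G d' j := by
        gcongr
        exact mpow_mul_mpow_le _ _ _ _ _ _
    _ ≤ csr A G (t₁ + t₂) i j := le_csr _ i a d' j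

lemma csr_add (h1 : mcgm A = 1) (t₁ t₂ : ℕ) :
    csr A G (t₁ + t₂) = mmul (csr A G t₁) (csr A G t₂) :=
  le_antisymm (csr_add_le h1 t₁ t₂) (mmul_csr_le h1 t₁ t₂)

lemma csr_graphCyc_le (h1 : mcgm A = 1) : csr A G (graphCyc G.E) ≤ csr A G 0 := by
  intro i j
  obtain ⟨a, d, had⟩ := exists_csr_eq G (graphCyc G.E) i j
  rw [had]
  rcases eq_or_ne (Rmat A G d j) 0 with h0 | h0
  · rw [h0, mul_zero]
    exact zero_le
  have hB := bddAbove_range_mpow h1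
  set γ := graphCyc G.E
  calc Cmat A G i a * mpow (Smat A G) γ a d * Rmat A G d j
      ≤ kleeneStar (mpow A γ) i a * kleeneStar (mpow A γ) a d * Rmat A G d j := by
        gcongr
        · exact Cmat_le i a
        · exact (mpow_mono Smat_le γ a d).trans (mpow_le_kleeneStar hB γ dvd_rfl a d)
    _ ≤ kleeneStar (mpow A γ) i d * Rmat A G d j := by
        gcongr
        exact kleeneStar_mul_kleeneStar_le hB γ i a d
    _ = Cmat A G i d * mpow (Smat A G) 0 d d * Rmat A G d j := by
        rw [Cmat_of_Nc (Nc_of_Rmat_ne_zero h0), mpow_zero_apply, if_pos rfl, mul_one]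
    _ ≤ csr A G 0 i j := le_csr 0 i d d j

lemma csr_zero_le (h1 : mcgm A = 1) : csr A G 0 ≤ csr A G (graphCyc G.E) := by
  intro i j
  obtain ⟨a, d, had⟩ := exists_csr_eq G 0 i j
  rw [had]
  rcases eq_or_ne (Cmat A G i a * mpow (Smat A G) 0 a d) 0 with h0 | h0
  · rw [h0, zero_mul]
    exact zero_le
  obtain rfl : a = d := by by_contra had; exact right_ne_zero_of_mul h0 (if_neg had)
  have hB := bddAbove_range_mpow h1
  set γ := graphCyc G.E
  obtain ⟨d', hd', e, hdvd, hret⟩ := exists_one_le_mpow_Smat_mul_mpow h1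
    (Nc_of_Cmat_ne_zero (left_ne_zero_of_mul h0)) (graphCyc_pos G.E) γ
  have he : γ ∣ e := (Nat.dvd_add_right dvd_rfl).mp hdvd
  calc Cmat A G i a * mpow (Smat A G) 0 a a * Rmat A G a j
      = Cmat A G i a * 1 * Rmat A G a j := by rw [mpow_zero_apply, if_pos rfl]
    _ ≤ Cmat A G i a * (mpow (Smat A G) γ a d' * mpow A e d' a) * Rmat A G a j := by gcongr
    _ = Cmat A G i a * mpow (Smat A G) γ a d' * (mpow A e d' a * Rmat A G a j) := by ring
    _ ≤ Cmat A G i a * mpow (Smat A G) γ a d' * Rmat A G d' j := by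
        gcongr
        rw [Rmat_of_Nc hd']
        exact (mul_le_mul' (mpow_le_kleeneStar hB γ he d' a) (Rmat_le a j)).trans
          (kleeneStar_mul_kleeneStar_le hB γ d' a j)
    _ ≤ csr A G γ i j := le_csr γ i a d' j

lemma csr_graphCyc (h1 : mcgm A = 1) : csr A G (graphCyc G.E) = csr A G 0 :=
  le_antisymm (csr_graphCyc_le h1) (csr_zero_le h1)

lemma csr_periodic (h1 : mcgm A = 1) : Function.Periodic (csr A G) (graphCyc G.E) := fun t => by
  rw [csr_add h1, csr_graphCyc h1, ← csr_add h1, add_zero]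

end CSR

/-- the group law `P^(t₁+t₂) = P^(t₁) ⊗ P^(t₂)`; consequently the
CSR products form a cyclic group under `⊗` with identity `P^(0) = C ⊗ R`. -/
theorem csr_group_law {n : ℕ} (A : Fin n → Fin n → ℝ≥0) (h1 : mcgm A = 1)
    (G : CritSubgraph A) :
    (∀ t₁ t₂ : ℕ, csr A G (t₁ + t₂) = mmul (csr A G t₁) (csr A G t₂)) ∧
    (∀ t : ℕ, mmul (csr A G 0) (csr A G t) = csr A G t) ∧
    (∀ t : ℕ, ∃ s : ℕ, mmul (csr A G t) (csr A G s) = csr A G 0) := by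
  refine ⟨csr_add h1, fun t => by rw [← csr_add h1, zero_add], fun t => ?_⟩
  obtain ⟨c, hc⟩ := Nat.exists_eq_succ_of_ne_zero (graphCyc_pos G.E).ne'
  refine ⟨c * t, ?_⟩
  rw [← csr_add h1, show t + c * t = t * graphCyc G.E by rw [hc, Nat.mul_succ]; ring]
  exact (csr_periodic h1).nat_mul_eq t

end MaxAlg
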